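/- arXiv:2012.13886 — 6 statements merged into one kernel-verified Lean document; each statement's English description precedes it below -/
import Mathlib

section
/- Let n be a positive integer and suppose c_n < 1, where c_n is the supremum of the ratios |X_{n,φ}(H)|/|H| over all finite groups H and automorphisms φ of H with φⁿ = id for which this ratio is strictly less than 1. Then for any finite group G with H_n(G) := ⟨x ∈ G : xⁿ ≠ 1⟩ nontrivial, the index |G : H_n(G)| is strictly less than 1/(1 - c_n). -/
/-!
Take `φ = id`, so that `X_{n,φ}(G) = {x | x ^ n = 1}`. With `K = H_n(G)`, this set contains `1`
and every element outside `K`, hence `|G| - |K| < |X_{n,φ}(G)|`; and it is a proper subset of `G`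
because `K ≠ 1`, so `|X_{n,φ}(G)| ≤ c |G|`. Together `(1 - c) |G| < |K|`, i.e.
`|G : K| < 1 / (1 - c)`.
-/

theorem Subgroup.card_lt_card_pow_eq_one_add_card {G : Type*} [Group G] [Finite G] {n : ℕ}
    (K : Subgroup G) (hK : ∀ x ∉ K, x ^ n = 1) :
    Nat.card G < Nat.card {x : G | x ^ n = 1} + Nat.card K := by
  have hsub : insert 1 (K : Set G)ᶜ ⊆ {x | x ^ n = 1} :=
    Set.insert_subset (one_pow n) fun x hx => hK x hx
  have hle := Set.ncard_le_ncard hsub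
  rw [Set.ncard_insert_of_notMem (by simp [K.one_mem])] at hle
  have hsplit := Set.ncard_add_ncard_compl (K : Set G)
  rw [Nat.card_coe_set_eq, ← SetLike.coe_sort_coe, Nat.card_coe_set_eq]
  omega

theorem Subgroup.index_lt_one_div {G : Type*} [Group G] [Finite G] (K : Subgroup G) {t : ℝ}
    (ht : 0 < t) (h : t * Nat.card G < Nat.card K) : (K.index : ℝ) < 1 / t := by
  have hK : (0 : ℝ) < Nat.card K := by exact_mod_cast Nat.card_pos
  rw [← K.index_mul_card, Nat.cast_mul] at h
  rw [lt_div_iff₀ ht]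
  nlinarith

theorem MulAut.prod_map_range_one_pow_apply {G : Type*} [Group G] (n : ℕ) (x : G) :
    ((List.range n).map fun i => ((1 : MulAut G) ^ i) x).prod = x ^ n := by
  simp [List.map_const', List.prod_replicate]

theorem index_HughesThompson_lt_general (n : ℕ) (c : ℝ) (hc : c < 1)
    (hub : ∀ (H : Type) [Group H] [Fintype H] (φ : MulAut H), φ ^ n = 1 →
      (Nat.card {x : H | ((List.range n).map fun i => (φ ^ i) x).prod = 1} : ℝ) /
          Nat.card H < 1 →
      (Nat.card {x : H | ((List.range n).map fun i => (φ ^ i) x).prod = 1} : ℝ) /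
          Nat.card H ≤ c)
    (G : Type) [Group G] [Fintype G]
    (hG : Subgroup.closure {x : G | x ^ n ≠ 1} ≠ ⊥) :
    ((Subgroup.closure {x : G | x ^ n ≠ 1}).index : ℝ) < 1 / (1 - c) := by
  set K := Subgroup.closure {x : G | x ^ n ≠ 1}
  obtain ⟨g, hg⟩ : ∃ g : G, g ^ n ≠ 1 := by
    by_contra! h
    exact hG (by simp [K, h])
  have hG0 : (0 : ℝ) < Nat.card G := by exact_mod_cast Nat.card_pos
  have hproper : (Nat.card {x : G | x ^ n = 1} : ℝ) < Nat.card G := by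
    exact_mod_cast Finite.card_subtype_lt (p := fun x : G => x ^ n = 1) hg
  have hratio := hub G 1 (one_pow n)
  simp only [MulAut.prod_map_range_one_pow_apply, div_lt_one hG0, div_le_iff₀ hG0] at hratio
  have hcount : (Nat.card G : ℝ) < Nat.card {x : G | x ^ n = 1} + Nat.card K := by
    exact_mod_cast K.card_lt_card_pow_eq_one_add_card fun x hx => by
      by_contra h
      exact hx (Subgroup.subset_closure h)
  exact K.index_lt_one_div (by linarith) (by linarith [hratio hproper])

/-- Suppose `c < 1` is an upper bound for all the ratios
`|X_{n,φ}(H)| / |H|` (over finite groups `H` and automorphisms `φ` with `φ ^ n = 1`)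
that are strictly less than `1` (i.e. `c_n ≤ c < 1`).  Then for every finite group `G`
whose generalized Hughes–Thompson subgroup `H_n(G) = ⟨x : x ^ n ≠ 1⟩` is nontrivial,
the index `|G : H_n(G)|` is strictly less than `1 / (1 - c)`. -/
theorem index_HughesThompson_lt (n : ℕ) (hn : 0 < n) (c : ℝ) (hc : c < 1)
    (hub : ∀ (H : Type) [Group H] [Fintype H] (φ : MulAut H), φ ^ n = 1 →
      (Nat.card {x : H | ((List.range n).map fun i => (φ ^ i) x).prod = 1} : ℝ) /
          Nat.card H < 1 →
      (Nat.card {x : H | ((List.range n).map fun i => (φ ^ i) x).prod = 1} : ℝ) /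
          Nat.card H ≤ c)
    (G : Type) [Group G] [Fintype G]
    (hG : Subgroup.closure {x : G | x ^ n ≠ 1} ≠ ⊥) :
    ((Subgroup.closure {x : G | x ^ n ≠ 1}).index : ℝ) < 1 / (1 - c) :=
  index_HughesThompson_lt_general n c hc hub G hG
end

section
/- Let G be a finite group, A a nonempty subset of G, and N a normal subgroup of G of index r. Let s be the number of cosets of N meeting A, and let x ∈ G be such that |Nx ∩ A| is maximal among all cosets. Then |A|/|G| ≤ s·|Nx ∩ A|/|G| and (r - s)·|N|/|G| ≤ 1 - |A|/|G|; consequently (|A|/|G|)/(1 - |A|/|G|) · (r - s)/s ≤ |Nx ∩ A|/|N| whenever |A| < |G|. -/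
open Pointwise

/-! Sort `A` by the cosets of `N`. Each of the `s` cosets meeting `A` holds at most
`|Nx ∩ A| ≤ |N|` of its elements, which gives the first bound, and the `r - s` cosets
missing `A` lie in its complement, which gives the second. The third is the quotient
of the two. -/

theorem Set.ncard_le_mul_ncard_image {α β : Type*} {f : α → β} {s : Set α} (hs : s.Finite)
    (n : ℕ) (hn : ∀ b ∈ f '' s, (s ∩ f ⁻¹' {b}).ncard ≤ n) :
    s.ncard ≤ n * (f '' s).ncard := by
  classical
  obtain ⟨t, rfl⟩ := hs.exists_finset_coe
  rw [← Finset.coe_image, Set.ncard_coe_finset, Set.ncard_coe_finset]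
  refine Finset.card_le_mul_card_image t n fun b hb => ?_
  convert hn b (by simpa using hb) using 1
  rw [← Set.ncard_coe_finset]
  congr 1
  ext
  simp

theorem QuotientGroup.preimage_mk_singleton_eq_mul_singleton {G : Type*} [Group G]
    (N : Subgroup G) [hN : N.Normal] (g : G) :
    QuotientGroup.mk ⁻¹' {(g : G ⧸ N)} = (N : Set G) * {g} := by
  rw [← Set.image_singleton, QuotientGroup.preimage_image_mk_eq_mul, Set.singleton_mul,
    Set.mul_singleton]
  exact (normal_iff_eq_cosets N).mp hN g

theorem Subgroup.ncard_coe_mul_singleton {G : Type*} [Group G] (N : Subgroup G) (g : G) :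
    ((N : Set G) * {g}).ncard = Nat.card N := by
  rw [Set.mul_singleton, Set.ncard_image_of_injective _ (mul_left_injective g),
    ← Nat.card_coe_set_eq]
  rfl

theorem div_one_sub_div_mul_div_le {a g m n r s : ℝ} (ha : 0 ≤ a) (hs : 0 ≤ s) (hm : 0 ≤ m)
    (hn : 0 < n) (hsr : s ≤ r) (hag : a < g) (ham : a ≤ s * m)
    (hcompl : (r - s) * n ≤ g - a) :
    a / g / (1 - a / g) * ((r - s) / s) ≤ m / n := by
  have hg : 0 < g := ha.trans_lt hag
  have hga : 0 < g - a := sub_pos.2 hag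
  calc a / g / (1 - a / g) * ((r - s) / s) = a / s * ((r - s) / (g - a)) := by
        rw [one_sub_div hg.ne', div_div_div_cancel_right₀ hg.ne']; ring
    _ ≤ m * (1 / n) :=
        mul_le_mul (div_le_of_le_mul₀ hs hm (mul_comm s m ▸ ham))
          ((div_le_div_iff₀ hga hn).2 (by linarith)) (div_nonneg (sub_nonneg.2 hsr) hga.le) hm
    _ = m / n := mul_one_div m n

theorem coset_counting_inequalities_general {G : Type*} [Group G] [Fintype G]
    (A : Set G) (N : Subgroup G) [N.Normal]
    (r s : ℕ) (hr : r = N.index)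
    (hs : s = ((QuotientGroup.mk : G → G ⧸ N) '' A).ncard)
    (x : G)
    (hx : ∀ g : G, (((N : Set G) * {g}) ∩ A).ncard ≤ (((N : Set G) * {x}) ∩ A).ncard) :
    (A.ncard : ℝ) / Nat.card G ≤
        s * ((((N : Set G) * {x}) ∩ A).ncard : ℝ) / Nat.card G ∧
      ((r : ℝ) - s) * Nat.card N / Nat.card G ≤ 1 - (A.ncard : ℝ) / Nat.card G ∧
      (A.ncard < Nat.card G →
        ((A.ncard : ℝ) / Nat.card G) / (1 - (A.ncard : ℝ) / Nat.card G) *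
            (((r : ℝ) - s) / s) ≤
          ((((N : Set G) * {x}) ∩ A).ncard : ℝ) / Nat.card N) := by
  set m := (((N : Set G) * {x}) ∩ A).ncard
  have hAm : A.ncard ≤ s * m := by
    rw [hs, mul_comm]
    refine Set.ncard_le_mul_ncard_image A.toFinite m ?_
    intro q _
    induction q using QuotientGroup.induction_on with | H g => ?_
    rw [QuotientGroup.preimage_mk_singleton_eq_mul_singleton, Set.inter_comm]
    exact hx g
  have hmN : m ≤ Nat.card N :=
    (Set.ncard_le_ncard Set.inter_subset_left).trans (N.ncard_coe_mul_singleton x).le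
  have hsr : s ≤ r := hs ▸ hr ▸ N.index_eq_card ▸ Set.ncard_le_card _
  have hN : (0 : ℝ) < Nat.card N := by exact_mod_cast Nat.card_pos
  have hG : (Nat.card G : ℝ) = Nat.card N * r := by
    rw [hr, ← N.card_mul_index, Nat.cast_mul]
  have hcompl : ((r : ℝ) - s) * Nat.card N ≤ Nat.card G - A.ncard := by
    have : (A.ncard : ℝ) ≤ s * Nat.card N := by exact_mod_cast hAm.trans (by gcongr)
    rw [hG]; linarith
  refine ⟨by gcongr; exact_mod_cast hAm, ?_, fun hlt => ?_⟩
  · rw [le_sub_iff_add_le, ← add_div, div_le_one (Nat.cast_pos.2 Nat.card_pos)]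
    linarith
  · exact div_one_sub_div_mul_div_le (by positivity) (by positivity) (by positivity) hN
      (by exact_mod_cast hsr) (by exact_mod_cast hlt) (by exact_mod_cast hAm) hcompl

/-- Let `G` be a finite group, `A` a nonempty subset, `N ⊴ G` of index `r`,
`s` the number of cosets of `N` meeting `A`, and `x` an element whose coset `N x`
maximizes `|N g ∩ A|`.  Then `|A|/|G| ≤ s * |N x ∩ A| / |G|`,
`(r - s) * |N| / |G| ≤ 1 - |A|/|G|`, and, whenever `|A| < |G|`,
`(|A|/|G|) / (1 - |A|/|G|) * ((r - s)/s) ≤ |N x ∩ A| / |N|`. -/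
theorem coset_counting_inequalities {G : Type*} [Group G] [Fintype G]
    (A : Set G) (hA : A.Nonempty) (N : Subgroup G) [N.Normal]
    (r s : ℕ) (hr : r = N.index)
    (hs : s = ((QuotientGroup.mk : G → G ⧸ N) '' A).ncard)
    (x : G)
    (hx : ∀ g : G, (((N : Set G) * {g}) ∩ A).ncard ≤ (((N : Set G) * {x}) ∩ A).ncard) :
    (A.ncard : ℝ) / Nat.card G ≤
        s * ((((N : Set G) * {x}) ∩ A).ncard : ℝ) / Nat.card G ∧
      ((r : ℝ) - s) * Nat.card N / Nat.card G ≤ 1 - (A.ncard : ℝ) / Nat.card G ∧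
      (A.ncard < Nat.card G →
        ((A.ncard : ℝ) / Nat.card G) / (1 - (A.ncard : ℝ) / Nat.card G) *
            (((r : ℝ) - s) / s) ≤
          ((((N : Set G) * {x}) ∩ A).ncard : ℝ) / Nat.card N) :=
  coset_counting_inequalities_general A N r s hr hs x hx
end

section
/- Let G be a profinite group, A a closed subset of G with positive Haar measure, and M a normal open subgroup of G. Let 𝒳 be the set of all normal open subgroups of G contained in M. Then sup{ m(Ng ∩ A)/m(N) : g ∈ G, N ∈ 𝒳 } = 1. -/
/-! If every coset `gN` (`N ≤ M` open normal) met `A` in at most an `r`-fraction of its measure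
with `r < 1`, then, summing over the finitely many cosets of `N` meeting `A`, we would get
`m(A) ≤ r · m(AN)`. But `AN` shrinks to the closed set `A` as `N` shrinks: by compactness `AN`
lies in any prescribed open `U ⊇ A` once `N` is small, and by outer regularity `m(U)` is as
close to `m(A)` as we like. Since `0 < m(A)`, this is impossible. -/

open MeasureTheory Pointwise

theorem QuotientGroup.preimage_mk_singleton_mk {G : Type*} [Group G] (N : Subgroup G) (g : G) :
    QuotientGroup.mk ⁻¹' {(g : G ⧸ N)} = g • (N : Set G) := by
  rw [← Set.image_singleton, QuotientGroup.preimage_image_mk_eq_mul]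
  exact Set.singleton_smul

theorem Subgroup.Normal.mul_singleton_eq_smul {G : Type*} [Group G] {N : Subgroup G}
    (hN : N.Normal) (g : G) : (N : Set G) * {g} = g • (N : Set G) := by
  rw [← Subgroup.set_mul_normal_comm]
  exact Set.singleton_smul

theorem ENNReal.le_ofReal_mul_of_toReal_div_le {x y : ENNReal} {r : ℝ} (hx : x ≠ ⊤)
    (hy₀ : y ≠ 0) (hy : y ≠ ⊤) (h : x.toReal / y.toReal ≤ r) :
    x ≤ ENNReal.ofReal r * y := by
  have hy_pos : 0 < y.toReal := ENNReal.toReal_pos hy₀ hy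
  calc x = ENNReal.ofReal x.toReal := (ENNReal.ofReal_toReal hx).symm
    _ ≤ ENNReal.ofReal (r * y.toReal) := ENNReal.ofReal_le_ofReal ((div_le_iff₀ hy_pos).1 h)
    _ = ENNReal.ofReal r * y := by rw [ENNReal.ofReal_mul' hy_pos.le, ENNReal.ofReal_toReal hy]

section CosetDecomposition

variable {G : Type*} [Group G] [MeasurableSpace G] [MeasurableMul G]
  (μ : Measure G) {N : Subgroup G}

theorem measurableSet_preimage_mk_singleton (hN : MeasurableSet (N : Set G)) (q : G ⧸ N) :
    MeasurableSet (QuotientGroup.mk ⁻¹' {q} : Set G) := by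
  induction q using QuotientGroup.induction_on with
  | H g => rw [QuotientGroup.preimage_mk_singleton_mk]; exact hN.const_smul g

theorem sum_measure_preimage_mk_inter [Fintype (G ⧸ N)] (hN : MeasurableSet (N : Set G))
    (s : Set G) : ∑ q : G ⧸ N, μ (QuotientGroup.mk ⁻¹' {q} ∩ s) = μ s := by
  have := sum_measure_preimage_singleton (μ := μ.restrict s) Finset.univ
    fun q _ => measurableSet_preimage_mk_singleton hN q
  simpa [Measure.restrict_apply (measurableSet_preimage_mk_singleton hN _)] using this

theorem measure_le_mul_measure_mul_subgroup [μ.IsMulLeftInvariant] [Finite (G ⧸ N)]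
    (hN : MeasurableSet (N : Set G)) {A : Set G} {c : ENNReal}
    (hc : ∀ a ∈ A, μ (a • N ∩ A) ≤ c * μ N) : μ A ≤ c * μ (A * N) := by
  have := Fintype.ofFinite (G ⧸ N)
  rw [← sum_measure_preimage_mk_inter μ hN A, ← sum_measure_preimage_mk_inter μ hN (A * N),
    Finset.mul_sum]
  refine Finset.sum_le_sum fun q _ => ?_
  rcases (QuotientGroup.mk ⁻¹' {q} ∩ A).eq_empty_or_nonempty with hq | ⟨a, rfl, ha⟩
  · simp [hq]
  · rw [QuotientGroup.preimage_mk_singleton_mk, Set.inter_eq_left.2 (Set.smul_set_subset_mul ha),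
      measure_smul]
    exact hc a ha

end CosetDecomposition

section Profinite

variable {G : Type*} [Group G] [TopologicalSpace G] [IsTopologicalGroup G] [CompactSpace G]
  [TotallyDisconnectedSpace G]

theorem exists_openNormalSubgroup_le_mul_subset {A U : Set G} (hA : IsClosed A) (hU : IsOpen U)
    (hAU : A ⊆ U) {M : Subgroup G} (hM : IsOpen (M : Set G)) :
    ∃ N : Subgroup G, N.Normal ∧ IsOpen (N : Set G) ∧ N ≤ M ∧ A * N ⊆ U := by
  obtain ⟨V, hV, hAV⟩ := compact_open_separated_mul_right hA.isCompact hU hAU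
  obtain ⟨N, hN⟩ := ProfiniteGrp.exist_openNormalSubgroup_sub_open_nhds_of_one
    (isOpen_interior.inter hM) ⟨mem_interior_iff_mem_nhds.2 hV, M.one_mem⟩
  refine ⟨N, inferInstance, N.isOpen', fun x hx => (hN hx).2, ?_⟩
  exact (Set.mul_subset_mul_left fun x hx => interior_subset (hN hx).1).trans hAV

theorem exists_openNormalSubgroup_le_measure_mul_lt [MeasurableSpace G] (μ : Measure G)
    [μ.OuterRegular] {A : Set G} (hA : IsClosed A) {M : Subgroup G} (hM : IsOpen (M : Set G))
    {b : ENNReal} (hb : μ A < b) :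
    ∃ N : Subgroup G, N.Normal ∧ IsOpen (N : Set G) ∧ N ≤ M ∧ μ (A * N) < b := by
  obtain ⟨U, hAU, hU, hUb⟩ := A.exists_isOpen_lt_of_lt b hb
  obtain ⟨N, hN, hNo, hNM, hANU⟩ := exists_openNormalSubgroup_le_mul_subset hA hU hAU hM
  exact ⟨N, hN, hNo, hNM, (measure_mono hANU).trans_lt hUb⟩

end Profinite

theorem sSup_coset_ratio_eq_one_general {G : Type*} [Group G] [TopologicalSpace G]
    [IsTopologicalGroup G] [CompactSpace G] [TotallyDisconnectedSpace G]
    [MeasurableSpace G] [BorelSpace G]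
    (μ : Measure G) [μ.IsHaarMeasure]
    (A : Set G) (hA : IsClosed A) (hApos : 0 < μ A)
    (M : Subgroup G) (hM : IsOpen (M : Set G)) :
    sSup {ρ : ℝ | ∃ (N : Subgroup G) (g : G), N.Normal ∧ IsOpen (N : Set G) ∧ N ≤ M ∧
        ρ = (μ (((N : Set G) * {g}) ∩ A)).toReal / (μ (N : Set G)).toReal} = 1 := by
  set S := {ρ : ℝ | ∃ (N : Subgroup G) (g : G), N.Normal ∧ IsOpen (N : Set G) ∧ N ≤ M ∧
    ρ = (μ (((N : Set G) * {g}) ∩ A)).toReal / (μ (N : Set G)).toReal}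
  have hS_le : ∀ ρ ∈ S, ρ ≤ 1 := by
    rintro _ ⟨N, g, hN, -, -, rfl⟩
    rw [hN.mul_singleton_eq_smul]
    refine div_le_one_of_le₀ (ENNReal.toReal_mono (measure_ne_top μ _) ?_) ENNReal.toReal_nonneg
    exact (measure_mono Set.inter_subset_left).trans_eq (measure_smul μ g _)
  refine le_antisymm (Real.sSup_le hS_le zero_le_one) (not_lt.1 fun hlt => ?_)
  set c := ENNReal.ofReal (sSup S)
  have hA_fin : μ A ≠ ⊤ := measure_ne_top μ A
  have hcA : μ A * c < μ A := by
    simpa using ENNReal.mul_lt_mul_right hApos.ne' hA_fin (ENNReal.ofReal_lt_one.2 hlt)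
  -- Below `μ A / c`, the coset bound `μ A ≤ c * μ (A * N)` would force `μ A < μ A`.
  obtain ⟨N, hN, hNo, hNM, hAN⟩ := exists_openNormalSubgroup_le_measure_mul_lt μ hA hM
    ((ENNReal.lt_div_iff_mul_lt (.inr hA_fin) (.inr hApos.ne')).2 hcA)
  have : Finite (G ⧸ N) := Subgroup.quotient_finite_of_isOpen N hNo
  have hcoset : ∀ g ∈ A, μ (g • (N : Set G) ∩ A) ≤ c * μ N := fun g _ =>
    ENNReal.le_ofReal_mul_of_toReal_div_le (measure_ne_top μ _)
      (hNo.measure_pos μ ⟨1, N.one_mem⟩).ne' (measure_ne_top μ _)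
      (le_csSup ⟨1, hS_le⟩ ⟨N, g, hN, hNo, hNM, by rw [hN.mul_singleton_eq_smul]⟩)
  refine (measure_le_mul_measure_mul_subgroup μ hNo.measurableSet hcoset).not_gt ?_
  rw [mul_comm]
  exact ENNReal.mul_lt_of_lt_div hAN

/-- Let `G` be a profinite group with normalized Haar measure `μ`, `A` a
closed subset of positive measure, and `M` a normal open subgroup.  Then the supremum of
the ratios `μ(N g ∩ A) / μ(N)`, over elements `g ∈ G` and normal open subgroups `N ≤ M`,
equals `1`. -/
theorem sSup_coset_ratio_eq_one {G : Type*} [Group G] [TopologicalSpace G]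
    [IsTopologicalGroup G] [CompactSpace G] [TotallyDisconnectedSpace G] [T2Space G]
    [MeasurableSpace G] [BorelSpace G]
    (μ : Measure G) [μ.IsHaarMeasure] [IsProbabilityMeasure μ]
    (A : Set G) (hA : IsClosed A) (hApos : 0 < μ A)
    (M : Subgroup G) [M.Normal] (hM : IsOpen (M : Set G)) :
    sSup {ρ : ℝ | ∃ (N : Subgroup G) (g : G), N.Normal ∧ IsOpen (N : Set G) ∧ N ≤ M ∧
        ρ = (μ (((N : Set G) * {g}) ∩ A)).toReal / (μ (N : Set G)).toReal} = 1 :=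
  sSup_coset_ratio_eq_one_general μ A hA hApos M hM
end

section
/- Let 𝒳 be a class of finite groups and suppose c^𝒳_n < 1, where c^𝒳_n is the supremum of ratios |X_{n,φ}(H)|/|H| over H ∈ 𝒳 and automorphisms φ of H with φⁿ = id, excluding the value 1. Let G be a profinite group, M a normal open subgroup, and φ a continuous automorphism of M such that every normal open subgroup N of G contained in M is φ-invariant with M/N ∈ 𝒳. If X_{n,φ}(M) ≠ M, then m_M(X_{n,φ}(M)) ≤ c^𝒳_n. -/
/-! If `x₀ ∉ X_{n,φ}(M)`, its twisted product `g ≠ 1` survives in a finite quotient `M/N` by an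
open normal subgroup of `G`, because open normal subgroups of a profinite group separate points.
As `N` is `φ`-stable, `φ` descends to `ψ ∈ Aut(M/N)` with `ψⁿ = 1`, and `X_{n,φ}(M)` lies in the
preimage of `X_{n,ψ}(M/N)`, which misses the image of `x₀`. That preimage is a union of cosets of
`N`, so its Haar measure is `|X_{n,ψ}(M/N)| / |M/N| < 1`, hence at most `c`. -/

open MeasureTheory

namespace MulAut

variable {G H : Type*} [Group G] [Group H]

def twistedProd (φ : MulAut G) (n : ℕ) (x : G) : G :=
  ((List.range n).map fun i => (φ ^ i) x).prod

theorem map_pow_apply (f : G →* H) {φ : MulAut G} {ψ : MulAut H}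
    (h : ∀ x, f (φ x) = ψ (f x)) (i : ℕ) (x : G) : f ((φ ^ i) x) = (ψ ^ i) (f x) := by
  induction i with
  | zero => rfl
  | succ i ih => rw [pow_succ', mul_apply, h, ih, pow_succ', mul_apply]

theorem map_twistedProd (f : G →* H) {φ : MulAut G} {ψ : MulAut H}
    (h : ∀ x, f (φ x) = ψ (f x)) (n : ℕ) (x : G) :
    f (φ.twistedProd n x) = ψ.twistedProd n (f x) := by
  simp only [twistedProd, map_list_prod, List.map_map, Function.comp_def, map_pow_apply f h]

end MulAut

theorem Subgroup.map_mulAut_eq_self {G : Type*} [Group G] {φ : MulAut G} {n : ℕ} (hn : n ≠ 0)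
    (hφ : φ ^ n = 1) {K : Subgroup G} (hK : ∀ x ∈ K, φ x ∈ K) : K.map (φ : G →* G) = K := by
  have hpow : ∀ i, ∀ x ∈ K, (φ ^ i) x ∈ K := fun i x hx => by
    induction i with
    | zero => exact hx
    | succ i ih => rw [pow_succ', MulAut.mul_apply]; exact hK _ ih
  refine le_antisymm (Subgroup.map_le_iff_le_comap.mpr hK)
    fun x hx => ⟨(φ ^ (n - 1)) x, hpow _ x hx, ?_⟩
  change (φ * φ ^ (n - 1)) x = x
  rw [← pow_succ', Nat.sub_add_cancel (Nat.pos_of_ne_zero hn), hφ, MulAut.one_apply]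

namespace QuotientGroup

variable {G : Type*} [Group G] (K : Subgroup G) [K.Normal] {φ : MulAut G}
  (hφK : K.map (φ : G →* G) = K)

theorem congr_pow_mk (i : ℕ) (x : G) :
    (congr K K φ hφK ^ i) (x : G ⧸ K) = ((φ ^ i) x : G ⧸ K) :=
  ((MulAut.map_pow_apply (mk' K) (fun _ => rfl) i x).symm)

theorem congr_pow_eq_one {n : ℕ} (hφ : φ ^ n = 1) : congr K K φ hφK ^ n = 1 := by
  ext q
  induction q using QuotientGroup.induction_on with
  | H x => rw [congr_pow_mk, hφ]; rfl

theorem twistedProd_congr_mk (n : ℕ) (x : G) :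
    MulAut.twistedProd (congr K K φ hφK) n (x : G ⧸ K) = (φ.twistedProd n x : G ⧸ K) :=
  (MulAut.map_twistedProd (mk' K) (fun _ => rfl) n x).symm

end QuotientGroup

section Measure

open scoped Pointwise

variable {G : Type*} [Group G] [MeasurableSpace G] [MeasurableMul G] (K : Subgroup G)
  (μ : Measure G) [μ.IsMulLeftInvariant]

theorem Subgroup.measure_preimage_mk [Finite (G ⧸ K)] (hK : MeasurableSet (K : Set G))
    (T : Set (G ⧸ K)) :
    μ (QuotientGroup.mk ⁻¹' T) = T.ncard * μ K := by
  have hT : T.Finite := T.toFinite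
  have hfiber : ∀ q : G ⧸ K, (QuotientGroup.mk ⁻¹' {q} : Set G) = q.out • (K : Set G) := by
    intro q
    conv_lhs => rw [← QuotientGroup.out_eq' q, ← Set.image_singleton]
    rw [QuotientGroup.preimage_image_mk_eq_mul, Set.singleton_mul]
    rfl
  have hsplit :
      (QuotientGroup.mk ⁻¹' T : Set G) = ⋃ q ∈ hT.toFinset, QuotientGroup.mk ⁻¹' {q} := by
    ext x
    simp
  rw [hsplit, measure_biUnion_finset, Set.ncard_eq_toFinset_card T hT]
  · simp [hfiber, measure_smul]
  · exact fun q _ q' _ hqq' => (Set.disjoint_singleton.mpr hqq').preimage _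
  · exact fun q _ => hfiber q ▸ hK.const_smul _

theorem Subgroup.toReal_measure_preimage_mk [K.FiniteIndex] [IsProbabilityMeasure μ]
    (hK : MeasurableSet (K : Set G)) (T : Set (G ⧸ K)) :
    (μ (QuotientGroup.mk ⁻¹' T)).toReal = T.ncard / K.index := by
  have hindex := K.index_mul_measure hK μ
  rw [measure_univ] at hindex
  rw [K.measure_preimage_mk μ hK T,
    ENNReal.eq_inv_of_mul_eq_one_left ((mul_comm _ _).trans hindex), ← div_eq_mul_inv,
    ENNReal.toReal_div, ENNReal.toReal_natCast, ENNReal.toReal_natCast]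

end Measure

theorem Set.ncard_div_natCard_lt_one {α : Type*} [Finite α] {s : Set α} (hs : s ≠ Set.univ) :
    (s.ncard : ℝ) / Nat.card α < 1 := by
  have h := Set.ncard_lt_card hs
  rw [div_lt_one (by exact_mod_cast (Nat.zero_le _).trans_lt h)]
  exact_mod_cast h

theorem exists_isOpen_normal_le_notMem {G : Type*} [Group G] [TopologicalSpace G]
    [IsTopologicalGroup G] [CompactSpace G] [TotallyDisconnectedSpace G] {M : Subgroup G}
    [M.Normal] (hM : IsOpen (M : Set G)) {g : G} (hg : g ≠ 1) :
    ∃ N : Subgroup G, N.Normal ∧ IsOpen (N : Set G) ∧ N ≤ M ∧ g ∉ N := by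
  obtain ⟨H, hH⟩ := ProfiniteGrp.exist_openNormalSubgroup_sub_open_nhds_of_one
    (isOpen_compl_singleton (x := g)) hg.symm
  exact ⟨(H : Subgroup G) ⊓ M, inferInstance, H.isOpen.inter hM, inf_le_right,
    fun h => hH h.1 rfl⟩

theorem haar_twisted_le_of_ne_univ_general (n : ℕ)
    (𝒳 : ∀ (H : Type) [Group H], Prop) (c : ℝ)
    (hub : ∀ (H : Type) [Group H] [Fintype H] (φ : MulAut H), 𝒳 H → φ ^ n = 1 →
      (Nat.card {x : H | ((List.range n).map fun i => (φ ^ i) x).prod = 1} : ℝ) /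
          Nat.card H ≠ 1 →
      (Nat.card {x : H | ((List.range n).map fun i => (φ ^ i) x).prod = 1} : ℝ) /
          Nat.card H ≤ c)
    {G : Type} [Group G] [TopologicalSpace G] [IsTopologicalGroup G] [CompactSpace G]
    [TotallyDisconnectedSpace G] [MeasurableSpace G] [BorelSpace G]
    (M : Subgroup G) [M.Normal] (hM : IsOpen (M : Set G))
    (ν : Measure ↥M) [ν.IsMulLeftInvariant] [IsProbabilityMeasure ν]
    (φ : MulAut ↥M) (hφ : φ ^ n = 1)
    (hinv : ∀ N : Subgroup G, ∀ _ : N.Normal, IsOpen (N : Set G) → N ≤ M →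
      ((∀ x : ↥M, (x : G) ∈ N → ((φ x : ↥M) : G) ∈ N) ∧
        𝒳 (↥M ⧸ N.subgroupOf M)))
    (hne : {x : ↥M | ((List.range n).map fun i => (φ ^ i) x).prod = 1} ≠ Set.univ) :
    (ν {x : ↥M | ((List.range n).map fun i => (φ ^ i) x).prod = 1}).toReal ≤ c := by
  obtain ⟨x₀, hx₀⟩ := (Set.ne_univ_iff_exists_notMem _).mp hne
  have hn : n ≠ 0 := by rintro rfl; exact hx₀ rfl
  obtain ⟨N, hN, hNopen, hNM, hx₀N⟩ := exists_isOpen_normal_le_notMem hM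
    (g := (φ.twistedProd n x₀ : G)) fun h => hx₀ (Subtype.ext h)
  obtain ⟨hφN, h𝒳⟩ := hinv N hN hNopen hNM
  set K := N.subgroupOf M
  have hKopen : IsOpen (K : Set M) := hNopen.preimage continuous_subtype_val
  have : CompactSpace M := isCompact_iff_compactSpace.mp (M.isClosed_of_isOpen hM).isCompact
  have : Finite (M ⧸ K) := K.quotient_finite_of_isOpen hKopen
  have : K.FiniteIndex := K.finiteIndex_of_finite_quotient
  have : Fintype (M ⧸ K) := Fintype.ofFinite _
  have hφK := Subgroup.map_mulAut_eq_self hn hφ (K := K) hφN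
  set ψ : MulAut (M ⧸ K) := QuotientGroup.congr K K φ hφK
  set S := {q : M ⧸ K | ψ.twistedProd n q = 1}
  have hXS : {x : M | φ.twistedProd n x = 1} ⊆ QuotientGroup.mk ⁻¹' S :=
    fun x (hx : φ.twistedProd n x = 1) => by
      simp only [S, ψ, Set.mem_preimage, Set.mem_ofPred_eq, QuotientGroup.twistedProd_congr_mk,
        hx, QuotientGroup.mk_one]
  have hx₀S : (x₀ : M ⧸ K) ∉ S := fun h => hx₀N <| show _ ∈ K from
    (QuotientGroup.eq_one_iff _).mp <| (QuotientGroup.twistedProd_congr_mk K hφK n x₀).symm.trans h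
  calc (ν {x : M | φ.twistedProd n x = 1}).toReal ≤ (ν (QuotientGroup.mk ⁻¹' S)).toReal :=
        ENNReal.toReal_mono (measure_ne_top _ _) (measure_mono hXS)
    _ = S.ncard / K.index := K.toReal_measure_preimage_mk ν hKopen.measurableSet S
    _ ≤ c := hub (M ⧸ K) ψ h𝒳 (QuotientGroup.congr_pow_eq_one K hφK hφ)
      (Set.ncard_div_natCard_lt_one ((Set.ne_univ_iff_exists_notMem S).mpr ⟨_, hx₀S⟩)).ne

/-- Let `𝒳` be a class of finite groups and `c < 1` an upper bound for all
ratios `|X_{n,φ}(H)| / |H|` (over `H ∈ 𝒳` and `φ ∈ Aut H` with `φ ^ n = 1`) which are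
different from `1` (i.e. `c^𝒳_n ≤ c < 1`).  Let `G` be a profinite group, `M` a normal
open subgroup with normalized Haar measure `ν`, and `φ` a continuous automorphism of `M`
such that every normal open subgroup `N` of `G` contained in `M` is `φ`-invariant with
`M/N ∈ 𝒳`.  If `X_{n,φ}(M) ≠ M` then `ν (X_{n,φ}(M)) ≤ c`. -/
theorem haar_twisted_le_of_ne_univ (n : ℕ)
    (𝒳 : ∀ (H : Type) [Group H], Prop) (c : ℝ) (hc : c < 1)
    (hub : ∀ (H : Type) [Group H] [Fintype H] (φ : MulAut H), 𝒳 H → φ ^ n = 1 →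
      (Nat.card {x : H | ((List.range n).map fun i => (φ ^ i) x).prod = 1} : ℝ) /
          Nat.card H ≠ 1 →
      (Nat.card {x : H | ((List.range n).map fun i => (φ ^ i) x).prod = 1} : ℝ) /
          Nat.card H ≤ c)
    {G : Type} [Group G] [TopologicalSpace G] [IsTopologicalGroup G] [CompactSpace G]
    [TotallyDisconnectedSpace G] [T2Space G] [MeasurableSpace G] [BorelSpace G]
    (M : Subgroup G) [M.Normal] (hM : IsOpen (M : Set G))
    (ν : Measure ↥M) [ν.IsMulLeftInvariant] [IsProbabilityMeasure ν]
    (φ : MulAut ↥M) (hcont : Continuous ⇑φ) (hφ : φ ^ n = 1)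
    (hinv : ∀ N : Subgroup G, ∀ _ : N.Normal, IsOpen (N : Set G) → N ≤ M →
      ((∀ x : ↥M, (x : G) ∈ N → ((φ x : ↥M) : G) ∈ N) ∧
        𝒳 (↥M ⧸ N.subgroupOf M)))
    (hne : {x : ↥M | ((List.range n).map fun i => (φ ^ i) x).prod = 1} ≠ Set.univ) :
    (ν {x : ↥M | ((List.range n).map fun i => (φ ^ i) x).prod = 1}).toReal ≤ c :=
  haar_twisted_le_of_ne_univ_general n 𝒳 c hub M hM ν φ hφ hinv hne
end

section
/- Let G be a compact group and α an automorphism of G with α³ = id, and suppose the set X = {x ∈ G : x · x^α · x^{α²} = 1} is measurable with Haar measure m(X) > 15/16. Then G is a 2-Engel group, i.e., [a,b,b] = 1 for all a, b ∈ G. -/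
/-!
Haar measure is left invariant, so each of the eight left translates `g⁻¹ X` misses less than
`1/16` of `G`, and together they miss less than everything: some `x` has `g x ∈ X` for all eight
`g`. For such an `x` the automorphism `σ g = x α(g) x⁻¹` satisfies `g σ(g) σ²(g) = 1` at the eight
elements `1, a, a⁻¹, b, ab, ab⁻¹, ba⁻¹, b⁻¹a⁻¹`, and these seven nontrivial relations alone
already force `[a, b, b] = 1`.
-/

open MeasureTheory

open scoped ENNReal

/-- The paper's convention; Mathlib's `⁅a, b⁆` is `a * b * a⁻¹ * b⁻¹`. -/
def pcomm {G : Type*} [Group G] (a b : G) : G := a⁻¹ * b⁻¹ * a * b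

/-- In `G ⋊ ⟨σ⟩` with `σ³ = 1` one has `(g σ)³ = twistedCube σ g`. -/
def twistedCube {G : Type*} [Group G] (σ : G → G) (g : G) : G := g * σ g * σ (σ g)

section TwistedCube

variable {G : Type*} [Group G]

theorem twistedCube_mul (α : MulAut G) (g x : G) :
    twistedCube α (g * x) = twistedCube (MulAut.conj x * α) g * twistedCube α x := by
  simp only [twistedCube, MulAut.mul_apply, MulAut.conj_apply, map_mul, map_inv]
  group

theorem twistedCube_conj_mul_eq_one {α : MulAut G} {g x : G} (hx : twistedCube α x = 1)
    (hgx : twistedCube α (g * x) = 1) : twistedCube (MulAut.conj x * α) g = 1 := by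
  rwa [twistedCube_mul, hx, mul_one] at hgx

/-- `[a,b,b]` is an explicit product of conjugates of the seven relators. -/
theorem pcomm_pcomm_eq_one_of_twistedCube_eq_one (σ : G →* G) {a b : G}
    (ha : twistedCube σ a = 1) (hb : twistedCube σ b = 1)
    (ha' : twistedCube σ a⁻¹ = 1) (hab : twistedCube σ (a * b) = 1)
    (hab' : twistedCube σ (a * b⁻¹) = 1) (hba' : twistedCube σ (b * a⁻¹) = 1)
    (hb'a' : twistedCube σ (b⁻¹ * a⁻¹) = 1) :
    pcomm (pcomm a b) b = 1 := by
  simp only [twistedCube, map_mul, map_inv] at ha hb ha' hab hab' hba' hb'a'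
  set A := σ a
  set B := σ b
  set P := σ A
  set Q := σ B
  have key : pcomm (pcomm a b) b =
      (b⁻¹ * a⁻¹) * (b * B * Q) * (b⁻¹ * a⁻¹)⁻¹ *
      ((b⁻¹ * a⁻¹) * (a * b * (A * B) * (P * Q))⁻¹ * (b⁻¹ * a⁻¹)⁻¹) *
      ((A * B * P * B⁻¹ * a * b⁻¹) * (b * a⁻¹ * (B * A⁻¹) * (Q * P⁻¹))⁻¹ *
        (A * B * P * B⁻¹ * a * b⁻¹)⁻¹) *
      ((A * B * P * A⁻¹ * Q * P⁻¹) * (a⁻¹ * A⁻¹ * P⁻¹) * (A * B * P * A⁻¹ * Q * P⁻¹)⁻¹) *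
      ((A * B * P) * (a * A * P) * (A * B * P)⁻¹) *
      ((A * B * A⁻¹) * (a⁻¹ * A⁻¹ * P⁻¹) * (A * B * A⁻¹)⁻¹) *
      ((A * B * A⁻¹) * (b⁻¹ * a⁻¹ * (B⁻¹ * A⁻¹) * (Q⁻¹ * P⁻¹))⁻¹ * (A * B * A⁻¹)⁻¹) *
      ((A * B * A⁻¹ * b⁻¹ * a⁻¹ * B⁻¹ * b⁻¹) * (b * B * Q)⁻¹ *
        (A * B * A⁻¹ * b⁻¹ * a⁻¹ * B⁻¹ * b⁻¹)⁻¹) *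
      ((A * B * A⁻¹ * b⁻¹ * a⁻¹ * Q) * (a * b * (A * B) * (P * Q)) *
        (A * B * A⁻¹ * b⁻¹ * a⁻¹ * Q)⁻¹) *
      ((A * B * A⁻¹ * b⁻¹ * a⁻¹) * (a * A * P)⁻¹ * (A * B * A⁻¹ * b⁻¹ * a⁻¹)⁻¹) *
      ((A * B * A⁻¹ * b⁻¹ * A * B⁻¹ * P * Q⁻¹) * (a * b⁻¹ * (A * B⁻¹) * (P * Q⁻¹)) *
        (A * B * A⁻¹ * b⁻¹ * A * B⁻¹ * P * Q⁻¹)⁻¹) *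
      ((A * B * A⁻¹ * a⁻¹ * Q) * (a * A * P)⁻¹ * (A * B * A⁻¹ * a⁻¹ * Q)⁻¹) *
      ((A * B * A⁻¹ * a⁻¹) * (a * A * P)⁻¹ * (A * B * A⁻¹ * a⁻¹)⁻¹) *
      ((A * B * P * Q) * (a * b * (A * B) * (P * Q)) * (A * B * P * Q)⁻¹) := by
    simp only [pcomm]
    group
  rw [key, ha, hb, ha', hab, hab', hba', hb'a']
  group

end TwistedCube

theorem exists_forall_mul_mem_of_card_mul_measure_compl_lt {G ι : Type*} [Group G]
    [MeasurableSpace G] [MeasurableMul G] (μ : Measure G) [μ.IsMulLeftInvariant]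
    [IsProbabilityMeasure μ] [Fintype ι] (g : ι → G) {X : Set G}
    (h : Fintype.card ι * μ Xᶜ < 1) : ∃ x, ∀ i, g i * x ∈ X := by
  by_contra! hcover
  have hunion : (Set.univ : Set G) ⊆ ⋃ i, (g i * ·) ⁻¹' Xᶜ := fun x _ ↦
    Set.mem_iUnion.mpr (hcover x)
  have : (1 : ℝ≥0∞) ≤ Fintype.card ι * μ Xᶜ :=
    calc (1 : ℝ≥0∞) = μ Set.univ := measure_univ.symm
      _ ≤ ∑ i, μ ((g i * ·) ⁻¹' Xᶜ) := (measure_mono hunion).trans (measure_iUnion_fintype_le _ _)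
      _ = Fintype.card ι * μ Xᶜ := by simp only [measure_preimage_mul]; simp
  exact this.not_gt h

theorem twoEngel_of_haar_gt_general {G : Type*} [Group G] [TopologicalSpace G]
    [IsTopologicalGroup G] [MeasurableSpace G] [BorelSpace G]
    (μ : Measure G) [μ.IsHaarMeasure] [IsProbabilityMeasure μ]
    (α : MulAut G)
    (hmeas : MeasurableSet {x : G | x * α x * (α ^ 2) x = 1})
    (hX : 15 / 16 < μ {x : G | x * α x * (α ^ 2) x = 1}) :
    ∀ a b : G, pcomm (pcomm a b) b = 1 := by
  intro a b
  set X : Set G := {x | twistedCube α x = 1}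
  have hXc : μ Xᶜ < 1 / 16 := by
    rw [← ENNReal.add_lt_add_iff_right (measure_ne_top μ X), add_comm (μ Xᶜ),
      prob_add_prob_compl (s := X) hmeas]
    calc (1 : ℝ≥0∞) = 1 / 16 + 15 / 16 := by
          rw [ENNReal.div_add_div_same, show (1 : ℝ≥0∞) + 15 = 16 by norm_num,
            ENNReal.div_self (by norm_num) (by norm_num)]
      _ < 1 / 16 + μ X := by gcongr; exacts [by simp, hX]
  have h8 : Fintype.card (Fin 8) * μ Xᶜ < 1 :=
    calc Fintype.card (Fin 8) * μ Xᶜ ≤ 16 * μ Xᶜ := by gcongr; norm_num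
      _ < 1 := by rwa [mul_comm, ← ENNReal.lt_div_iff_mul_lt] <;> simp
  obtain ⟨x, hx⟩ := exists_forall_mul_mem_of_card_mul_measure_compl_lt μ
    ![1, a, a⁻¹, b, a * b, a * b⁻¹, b * a⁻¹, b⁻¹ * a⁻¹] h8
  have hσ (i : Fin 8) := twistedCube_conj_mul_eq_one (one_mul x ▸ hx 0) (hx i)
  exact pcomm_pcomm_eq_one_of_twistedCube_eq_one (MulAut.conj x * α).toMonoidHom
    (hσ 1) (hσ 3) (hσ 2) (hσ 4) (hσ 5) (hσ 6) (hσ 7)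

/-- Let `G` be a compact group with normalized Haar measure `μ` and `α` an
automorphism with `α ^ 3 = 1` such that `X = {x | x * x^α * x^{α²} = 1}` is measurable
with `μ X > 15/16`.  Then `G` is a `2`-Engel group: `[a,b,b] = 1` for all `a b`. -/
theorem twoEngel_of_haar_gt {G : Type*} [Group G] [TopologicalSpace G]
    [IsTopologicalGroup G] [CompactSpace G] [MeasurableSpace G] [BorelSpace G]
    (μ : Measure G) [μ.IsHaarMeasure] [IsProbabilityMeasure μ]
    (α : MulAut G) (hcont : Continuous ⇑α) (hα : α ^ 3 = 1)
    (hmeas : MeasurableSet {x : G | x * α x * (α ^ 2) x = 1})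
    (hX : 15 / 16 < μ {x : G | x * α x * (α ^ 2) x = 1}) :
    ∀ a b : G, pcomm (pcomm a b) b = 1 :=
  twoEngel_of_haar_gt_general μ α hmeas hX
end

section
/- Every 2-Engel group is nilpotent of class at most 3. -/
/-! In a 2-Engel group every element commutes with all of its conjugates, so the normal closure
of each element is abelian. Expanding the Engel identity `⁅⁅x, yz⁆, yz⁆ = 1` inside these abelian
subgroups shows that `⁅⁅x, y⁆, z⁆` is alternating in `x, y, z`, and the Hall–Witt identity then
gives `⁅⁅x, y⁆, z⁆ ^ 3 = 1`. Expanding the alternation at a product `wz` shows that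
`u = ⁅⁅⁅x, y⁆, z⁆, w⁆` satisfies `u ^ 2 = 1`, while `u ^ 3 = ⁅⁅⁅x, y⁆, z⁆ ^ 3, w⁆ = 1`; hence
`u = 1`. -/

open scoped commutatorElement
open Subgroup

section

variable {G : Type*} [Group G]

theorem pcomm_eq_commutatorElement_inv_inv (a b : G) : pcomm a b = ⁅a⁻¹, b⁻¹⁆ := by
  simp [pcomm, commutatorElement_def]

@[simp]
theorem Subgroup.mem_normalClosure_singleton_self (x : G) : x ∈ normalClosure {x} :=
  subset_normalClosure rfl

@[simp]
theorem Subgroup.commutatorElement_mem_left {N : Subgroup G} [hN : N.Normal] {u : G}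
    (hu : u ∈ N) (a : G) : ⁅u, a⁆ ∈ N := by
  simpa [commutatorElement_def, mul_assoc] using mul_mem hu (hN.conj_mem _ (inv_mem hu) a)

@[simp]
theorem Subgroup.commutatorElement_mem_right {N : Subgroup G} [hN : N.Normal] {u : G}
    (hu : u ∈ N) (a : G) : ⁅a, u⁆ ∈ N := by
  simpa [commutatorElement_def] using mul_mem (hN.conj_mem u hu a) (inv_mem hu)

theorem commutatorElement_mul_left_of_commute {a b c : G} (h : Commute a ⁅b, c⁆) :
    ⁅a * b, c⁆ = ⁅b, c⁆ * ⁅a, c⁆ := by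
  rw [commutatorElement_mul_left_eq_conj_mul, h.mul_inv_cancel]

theorem commutatorElement_mul_right_of_commute {a b c : G} (h : Commute b ⁅a, c⁆) :
    ⁅a, b * c⁆ = ⁅a, b⁆ * ⁅a, c⁆ := by
  rw [commutatorElement_mul_right_eq_mul_conj, mul_assoc, mul_assoc, h.mul_inv_cancel_assoc]

def IsTwoEngel (G : Type*) [Group G] : Prop := ∀ a b : G, Commute ⁅a, b⁆ b

theorem isTwoEngel_of_pcomm (h : ∀ x y : G, pcomm (pcomm x y) y = 1) : IsTwoEngel G := by
  intro a b
  have hab := h a⁻¹ b⁻¹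
  rw [pcomm_eq_commutatorElement_inv_inv, pcomm_eq_commutatorElement_inv_inv, inv_inv, inv_inv,
    commutatorElement_eq_one_iff_commute] at hab
  simpa using hab.inv_left

namespace IsTwoEngel

variable (hE : IsTwoEngel G)
include hE

theorem commute_commutatorElement_left (a b : G) : Commute ⁅a, b⁆ a := by
  simpa [commutatorElement_inv] using (hE b a).inv_left

theorem commute_conj_self (x g : G) : Commute x (g * x * g⁻¹) := by
  have h : g * x * g⁻¹ = ⁅g, x⁆ * x := by simp [commutatorElement_def]
  rw [h]
  exact (hE g x).symm.mul_right (Commute.refl x)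

theorem commute_of_mem_normalClosure {x u v : G} (hu : u ∈ normalClosure {x})
    (hv : v ∈ normalClosure {x}) : Commute u v := by
  have hconj : ∀ p ∈ Group.conjugatesOfSet {x}, ∀ q ∈ Group.conjugatesOfSet {x},
      p * q = q * p := by
    simp only [Group.mem_conjugatesOfSet_iff, Set.mem_singleton_iff, exists_eq_left, isConj_iff]
    rintro _ ⟨g, rfl⟩ _ ⟨k, rfl⟩
    have h := (hE.commute_conj_self x (g⁻¹ * k)).conj g
    rwa [show g * (g⁻¹ * k * x * (g⁻¹ * k)⁻¹) * g⁻¹ = k * x * k⁻¹ by group] at h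
  have := isMulCommutative_closure hconj
  exact setLike_mul_comm (s := closure (Group.conjugatesOfSet {x})) hu hv

theorem commute_commutatorElement_commutatorElement (a b c : G) : Commute b ⁅⁅a, b⁆, c⁆ :=
  hE.commute_of_mem_normalClosure (x := b) (by simp) (by simp)

theorem commutatorElement_inv_left (a b : G) : ⁅a⁻¹, b⁆ = ⁅a, b⁆⁻¹ := by
  rw [_root_.commutatorElement_inv_left, ← commutatorElement_inv]
  simpa using (hE.commute_commutatorElement_left a b).inv_inv.symm.mul_inv_cancel

theorem commutatorElement_pow_left (a b : G) (n : ℕ) : ⁅a ^ n, b⁆ = ⁅a, b⁆ ^ n := by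
  induction n with
  | zero => simp
  | succ n ih =>
    rw [pow_succ, commutatorElement_mul_left_of_commute
      ((hE.commute_commutatorElement_left a b).symm.pow_left n), ih, pow_succ']

theorem commutatorElement_mul_left_of_mem {x u v : G} (hu : u ∈ normalClosure {x})
    (hv : v ∈ normalClosure {x}) (c : G) : ⁅u * v, c⁆ = ⁅u, c⁆ * ⁅v, c⁆ := by
  rw [commutatorElement_mul_left_of_commute (hE.commute_of_mem_normalClosure hu (by simp [hv])),
    (hE.commute_of_mem_normalClosure (x := x) (by simp [hv]) (by simp [hu])).eq]

theorem commutatorElement_mul_right (a b c : G) :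
    ⁅a, b * c⁆ = ⁅a, b⁆ * ⁅a, c⁆ * ⁅⁅a, c⁆, b⁆⁻¹ := by
  have h : b * ⁅a, c⁆ * b⁻¹ = ⁅a, c⁆ * ⁅⁅a, c⁆⁻¹, b⁆ := by
    simp only [commutatorElement_def]; group
  rw [commutatorElement_mul_right_eq_mul_conj, mul_assoc _ b, mul_assoc _ (b * _), h,
    hE.commutatorElement_inv_left, mul_assoc]

theorem commutatorElement_commutatorElement_swap₁₂ (a b c : G) :
    ⁅⁅b, a⁆, c⁆ = ⁅⁅a, b⁆, c⁆⁻¹ := by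
  rw [← commutatorElement_inv a b, hE.commutatorElement_inv_left]

theorem commutatorElement_commutatorElement_swap₂₃ (a b c : G) :
    ⁅⁅a, c⁆, b⁆ = ⁅⁅a, b⁆, c⁆⁻¹ := by
  have hP : ⁅⁅a, b⁆, b * c⁆ = ⁅⁅a, b⁆, c⁆ := by
    rw [commutatorElement_mul_right_of_commute
      (hE.commute_commutatorElement_commutatorElement a b c), (hE a b).commutator_eq, one_mul]
  have hQ : ⁅⁅a, c⁆, b * c⁆ = ⁅⁅a, c⁆, b⁆ := by
    rw [commutatorElement_mul_right_eq_mul_conj, (hE a c).commutator_eq, mul_one,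
      mul_inv_cancel_right]
  have hR : ⁅⁅⁅a, c⁆, b⁆⁻¹, b * c⁆ = 1 :=
    ((hE ⁅a, c⁆ b).mul_right
      (hE.commute_commutatorElement_commutatorElement a c b).symm).inv_left.commutator_eq
  have h := (hE a (b * c)).commutator_eq
  rw [hE.commutatorElement_mul_right a b c,
    hE.commutatorElement_mul_left_of_mem (x := a) (by simp [mul_mem]) (by simp),
    hE.commutatorElement_mul_left_of_mem (x := a) (by simp) (by simp), hP, hQ, hR, mul_one] at h
  exact eq_inv_of_mul_eq_one_right h

theorem commutatorElement_commutatorElement_rotate (a b c : G) :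
    ⁅⁅b, c⁆, a⁆ = ⁅⁅a, b⁆, c⁆ := by
  rw [hE.commutatorElement_commutatorElement_swap₂₃,
    hE.commutatorElement_commutatorElement_swap₁₂, inv_inv]

theorem commutatorElement_commutatorElement_conj (a b c : G) :
    ⁅⁅a, b⁆, b * c * b⁻¹⁆ = ⁅⁅a, b⁆, c⁆ :=
  calc ⁅⁅a, b⁆, b * c * b⁻¹⁆ = ⁅b * ⁅a, b⁆ * b⁻¹, b * c * b⁻¹⁆ := by
        rw [(hE a b).symm.mul_inv_cancel]
    _ = b * ⁅⁅a, b⁆, c⁆ * b⁻¹ := (conjugate_commutatorElement _ _ _).symm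
    _ = ⁅⁅a, b⁆, c⁆ := (hE.commute_commutatorElement_commutatorElement a b c).mul_inv_cancel

theorem jacobi (a b c : G) : ⁅⁅a, b⁆, c⁆ * ⁅⁅b, c⁆, a⁆ * ⁅⁅c, a⁆, b⁆ = 1 := by
  simpa only [hE.commutatorElement_commutatorElement_conj] using
    commutatorElement_commutatorElement_conj_mul a b c

theorem commutatorElement_commutatorElement_pow_three (a b c : G) : ⁅⁅a, b⁆, c⁆ ^ 3 = 1 := by
  have h := hE.jacobi a b c
  rwa [hE.commutatorElement_commutatorElement_rotate b c a,
    hE.commutatorElement_commutatorElement_rotate a b c, ← pow_three'] at h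

theorem commutatorElement_commutatorElement_commutatorElement_sq (a b c d : G) :
    ⁅⁅⁅a, b⁆, c⁆, d⁆ ^ 2 = 1 := by
  have hC : ⁅⁅⁅a, c⁆, d⁆, b⁆ = ⁅⁅⁅a, b⁆, c⁆, d⁆ := by
    rw [hE.commutatorElement_commutatorElement_swap₂₃ ⁅a, c⁆ b d,
      hE.commutatorElement_commutatorElement_swap₂₃ a b c, hE.commutatorElement_inv_left, inv_inv]
  have hL : ⁅⁅a, d * c⁆, b⁆ = ⁅⁅a, b⁆, d⁆⁻¹ * ⁅⁅a, b⁆, c⁆⁻¹ * ⁅⁅⁅a, b⁆, c⁆, d⁆⁻¹ := by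
    rw [hE.commutatorElement_mul_right a d c,
      hE.commutatorElement_mul_left_of_mem (x := a) (by simp [mul_mem]) (by simp),
      hE.commutatorElement_mul_left_of_mem (x := a) (by simp) (by simp),
      hE.commutatorElement_inv_left, hC, hE.commutatorElement_commutatorElement_swap₂₃ a b d,
      hE.commutatorElement_commutatorElement_swap₂₃ a b c]
  have h := hE.commutatorElement_commutatorElement_swap₂₃ a b (d * c)
  rw [hL, hE.commutatorElement_mul_right, mul_inv_rev, mul_inv_rev, inv_inv] at h
  have hP : ⁅a, b⁆ ∈ normalClosure {a} := by simp
  have hAB : Commute ⁅⁅a, b⁆, d⁆⁻¹ ⁅⁅a, b⁆, c⁆⁻¹ :=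
    hE.commute_of_mem_normalClosure (x := a) (by simp [hP]) (by simp [hP])
  have hABD : Commute ⁅⁅⁅a, b⁆, c⁆, d⁆ (⁅⁅a, b⁆, c⁆⁻¹ * ⁅⁅a, b⁆, d⁆⁻¹) :=
    hE.commute_of_mem_normalClosure (x := a) (by simp [hP]) (by simp [hP, mul_mem])
  rw [hABD.eq, ← hAB.eq] at h
  rw [sq, ← inv_eq_iff_mul_eq_one]
  exact mul_left_cancel h

theorem commutatorElement_commutatorElement_commutatorElement_eq_one (a b c d : G) :
    ⁅⁅⁅a, b⁆, c⁆, d⁆ = 1 := by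
  have h3 : ⁅⁅⁅a, b⁆, c⁆, d⁆ ^ 3 = 1 := by
    rw [← hE.commutatorElement_pow_left, hE.commutatorElement_commutatorElement_pow_three,
      commutatorElement_one_left]
  rwa [pow_succ, hE.commutatorElement_commutatorElement_commutatorElement_sq, one_mul] at h3

theorem upperCentralSeries_three_eq_top : Subgroup.upperCentralSeries G 3 = ⊤ := by
  refine eq_top_iff.mpr fun a _ => ?_
  simp only [Subgroup.mem_upperCentralSeries_succ_iff, Subgroup.upperCentralSeries_zero, mem_bot]
  exact hE.commutatorElement_commutatorElement_commutatorElement_eq_one a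

end IsTwoEngel

end

/-- Every `2`-Engel group (`[x,y,y] = 1` for all `x y`) is nilpotent of
class at most `3`, i.e. the lower central series reaches the trivial subgroup in three
steps. -/
theorem twoEngel_nilpotent_class_le_three {G : Type*} [Group G]
    (hG : ∀ x y : G, pcomm (pcomm x y) y = 1) :
    (⊤ : Subgroup G).lowerCentralSeries 3 = ⊥ :=
  lowerCentralSeries_eq_bot_iff_upperCentralSeries_eq_top.mpr
    (isTwoEngel_of_pcomm hG).upperCentralSeries_three_eq_top
end
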